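/- Let v ∈ H¹₀(U) be Lipschitz with γ_q(Dv) ≤ 1 almost everywhere, where 1/p + 1/q = 1. Then v(x) ≤ d_p(x, ∂U) for all x ∈ U, where d_p is the distance induced by the norm γ_p. -/

import Mathlib

open Set

/-- The `r`-norm on `ℝ²`. -/
noncomputable def gammaR (r : ℝ) (x : ℝ × ℝ) : ℝ :=
  (|x.1| ^ r + |x.2| ^ r) ^ (1 / r)

/-- The `p`-distance to the boundary of `U`. -/
noncomputable def dP (p : ℝ) (U : Set (ℝ × ℝ)) (x : ℝ × ℝ) : ℝ :=
  sInf {t : ℝ | ∃ y ∈ frontier U, t = gammaR p (x - y)}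

/-- The gradient of `v` as a vector in `ℝ²`. -/
noncomputable def grad2 (v : ℝ × ℝ → ℝ) (x : ℝ × ℝ) : ℝ × ℝ :=
  (fderiv ℝ v x (1, 0), fderiv ℝ v x (0, 1))

/-!
Along a segment `[a, b] ⊆ U`, the chain rule and Hölder's inequality bound the derivative of
`t ↦ v (a + t • (b - a))` by `γ_p(b - a) γ_q(Dv) ≤ γ_p(b - a)` wherever `v` is differentiable,
so the fundamental theorem of calculus for this Lipschitz function gives
`|v b - v a| ≤ γ_p(b - a)`. For `y ∈ ∂U`, walk from `x` towards `y` up to the first boundary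
point `z`, where `v z = 0`: then `v x ≤ γ_p(z - x) ≤ γ_p(y - x)`.
-/

open MeasureTheory Filter AffineMap

theorem LipschitzOnWith.abs_sub_le_of_ae_abs_deriv_le {g : ℝ → ℝ} {K : NNReal} {a b C : ℝ}
    (hg : LipschitzOnWith K g (uIcc a b)) (h : ∀ᵐ t, t ∈ uIoc a b → |deriv g t| ≤ C) :
    |g b - g a| ≤ C * |b - a| := by
  rw [← hg.absolutelyContinuousOnInterval.integral_deriv_eq_sub]
  exact intervalIntegral.norm_integral_le_of_norm_le_const_ae (f := deriv g) h

section NormedSpace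

variable {F : Type*} [NormedAddCommGroup F] [NormedSpace ℝ F]

theorem LipschitzWith.abs_add_sub_le_of_ae_abs_fderiv_le {v : F → ℝ} {K : NNReal}
    (hv : LipschitzWith K v) {c w : F} {C : ℝ}
    (h : ∀ᵐ t : ℝ, t ∈ Ioc 0 1 →
      DifferentiableAt ℝ v (c + t • w) ∧ |fderiv ℝ v (c + t • w) w| ≤ C) :
    |v (c + w) - v c| ≤ C := by
  have hline : LipschitzWith _ (fun t : ℝ ↦ v (c + t • w)) := hv.comp
    ((isometry_add_left c).lipschitz.comp (ContinuousLinearMap.toSpanSingleton ℝ w).lipschitz)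
  have hbound := hline.lipschitzOnWith.abs_sub_le_of_ae_abs_deriv_le (a := 0) (b := 1) (C := C) ?_
  · simpa using hbound
  filter_upwards [h] with t ht hmem
  obtain ⟨hdiff, hC⟩ := ht (by rwa [uIoc_of_le zero_le_one] at hmem)
  have hmove : HasDerivAt (fun t : ℝ ↦ c + t • w) w t := by
    simpa using ((hasDerivAt_id t).smul_const w).const_add c
  have hderiv : HasDerivAt (fun t : ℝ ↦ v (c + t • w)) (fderiv ℝ v (c + t • w) w) t :=
    hdiff.hasFDerivAt.comp_hasDerivAt t hmove
  rwa [hderiv.deriv]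

variable [FiniteDimensional ℝ F] [MeasurableSpace F] [BorelSpace F]

theorem ae_ae_add_smul_of_ae (μ : Measure F) [μ.IsAddHaarMeasure] {P : F → Prop}
    (h : ∀ᵐ x ∂μ, P x) (w : F) : ∀ᵐ x ∂μ, ∀ᵐ t : ℝ, P (x + t • w) := by
  obtain ⟨N, hPN, hN, hμN⟩ := exists_measurable_superset_of_null (ae_iff.1 h)
  have hline := (ae_ae_add_linearMap_mem_iff (LinearMap.toSpanSingleton ℝ F w) volume μ
    hN.compl).2 (measure_eq_zero_iff_ae_notMem.1 hμN)
  filter_upwards [hline] with x hx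
  filter_upwards [hx] with t ht
  by_contra hP
  exact ht (hPN hP)

theorem LipschitzWith.abs_sub_le_of_ae_abs_fderiv_le (μ : Measure F) [μ.IsAddHaarMeasure]
    {v : F → ℝ} {K : NNReal} (hv : LipschitzWith K v) {U : Set F} (hU : IsOpen U) {a b : F}
    (hab : segment ℝ a b ⊆ U) {C : ℝ}
    (h : ∀ᵐ x ∂μ, x ∈ U → DifferentiableAt ℝ v x ∧ |fderiv ℝ v x (b - a)| ≤ C) :
    |v b - v a| ≤ C := by
  obtain ⟨δ, hδ, hδU⟩ : ∃ δ > 0, Metric.thickening δ (segment ℝ a b) ⊆ U := by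
    refine IsCompact.exists_thickening_subset_open ?_ hU hab
    rw [segment_eq_image_lineMap]
    exact isCompact_Icc.image AffineMap.lineMap_continuous
  have hclosed : IsClosed {c | |v (c + (b - a)) - v c| ≤ C} :=
    have := hv.continuous
    isClosed_le (by fun_prop) continuous_const
  -- The segment itself may lie in the exceptional null set; almost every translate does not.
  suffices a ∈ closure {c | |v (c + (b - a)) - v c| ≤ C} by
    simpa using hclosed.closure_subset this
  rw [Metric.mem_closure_iff]
  intro ε hε
  have hball : μ (Metric.ball a (min ε δ)) ≠ 0 := (Metric.measure_ball_pos μ a (by positivity)).ne'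
  have := ae_restrict_neBot.2 hball
  obtain ⟨c, hca, hc⟩ :=
    ((ae_restrict_mem (μ := μ) (measurableSet_ball (x := a) (ε := min ε δ))).and
      (ae_restrict_of_ae (ae_ae_add_smul_of_ae μ h (b - a)))).exists
  refine ⟨c, ?_, ?_⟩
  · refine hv.abs_add_sub_le_of_ae_abs_fderiv_le ?_
    filter_upwards [hc] with t ht htI
    refine ht (hδU ?_)
    rw [Metric.mem_thickening_iff]
    refine ⟨lineMap a b t, ?_, ?_⟩
    · rw [segment_eq_image_lineMap]
      exact ⟨t, Ioc_subset_Icc_self htI, rfl⟩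
    · rw [lineMap_apply_module', add_comm c, dist_add_left]
      exact (Metric.mem_ball.1 hca).trans_le (min_le_right _ _)
  · rw [dist_comm]
    exact (Metric.mem_ball.1 hca).trans_le (min_le_left _ _)

end NormedSpace

theorem IsOpen.exists_lineMap_mem_frontier {E : Type*} [AddCommGroup E] [Module ℝ E]
    [TopologicalSpace E] [IsTopologicalAddGroup E] [ContinuousSMul ℝ E] {U : Set E}
    (hU : IsOpen U) {x y : E} (hx : x ∈ U) (hy : y ∉ U) :
    ∃ T ∈ Ioc (0 : ℝ) 1, lineMap x y T ∈ frontier U ∧ ∀ t ∈ Ico 0 T, lineMap x y t ∈ U := by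
  have hcont : Continuous (lineMap x y : ℝ → E) := AffineMap.lineMap_continuous
  obtain ⟨T, ⟨hTI, hTU⟩, hTmin⟩ : ∃ T, IsLeast {t ∈ Icc (0 : ℝ) 1 | lineMap x y t ∉ U} T :=
    (isCompact_Icc.inter_right (hU.isClosed_compl.preimage hcont)).exists_isLeast
      ⟨1, right_mem_Icc.2 zero_le_one, by simpa⟩
  have hbelow : ∀ t ∈ Ico 0 T, lineMap x y t ∈ U := fun t ht ↦
    by_contra fun h ↦ ht.2.not_ge (hTmin ⟨⟨ht.1, ht.2.le.trans hTI.2⟩, h⟩)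
  have hT0 : 0 < T := hTI.1.lt_of_ne (by rintro rfl; exact hTU (by simpa))
  refine ⟨T, ⟨hT0, hTI.2⟩, ?_, hbelow⟩
  rw [hU.frontier_eq]
  refine ⟨closure_mono (image_subset_iff.2 hbelow) (mem_closure_image hcont.continuousAt ?_), hTU⟩
  rw [closure_Ico hT0.ne]
  exact right_mem_Icc.2 hT0.le

theorem gammaR_nonneg (r : ℝ) (x : ℝ × ℝ) : 0 ≤ gammaR r x := by
  unfold gammaR
  positivity

theorem gammaR_sub_comm (r : ℝ) (x y : ℝ × ℝ) : gammaR r (x - y) = gammaR r (y - x) := by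
  simp only [gammaR, Prod.fst_sub, Prod.snd_sub, abs_sub_comm]

theorem gammaR_smul {r : ℝ} (hr : r ≠ 0) (c : ℝ) (x : ℝ × ℝ) :
    gammaR r (c • x) = |c| * gammaR r x := by
  simp only [gammaR, Prod.smul_fst, Prod.smul_snd, smul_eq_mul, abs_mul]
  rw [Real.mul_rpow (abs_nonneg _) (abs_nonneg _), Real.mul_rpow (abs_nonneg _) (abs_nonneg _),
    ← mul_add, Real.mul_rpow (by positivity) (by positivity), ← Real.rpow_mul (abs_nonneg c),
    mul_one_div_cancel hr, Real.rpow_one]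

theorem abs_fst_mul_add_snd_mul_le_gammaR_mul {p q : ℝ} (hpq : p.HolderConjugate q)
    (a b : ℝ × ℝ) : |a.1 * b.1 + a.2 * b.2| ≤ gammaR p a * gammaR q b := by
  have holder := Real.inner_le_Lp_mul_Lq Finset.univ ![|a.1|, |a.2|] ![|b.1|, |b.2|] hpq
  simp only [Fin.sum_univ_two, Matrix.cons_val_zero, Matrix.cons_val_one, abs_abs] at holder
  calc |a.1 * b.1 + a.2 * b.2| ≤ |a.1| * |b.1| + |a.2| * |b.2| := by
        simpa only [abs_mul] using abs_add_le (a.1 * b.1) (a.2 * b.2)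
    _ ≤ gammaR p a * gammaR q b := holder

theorem ContinuousLinearMap.apply_eq_fst_mul_add_snd_mul (L : ℝ × ℝ →L[ℝ] ℝ) (w : ℝ × ℝ) :
    L w = w.1 * L (1, 0) + w.2 * L (0, 1) := by
  conv_lhs => rw [show w = w.1 • ((1 : ℝ), (0 : ℝ)) + w.2 • ((0 : ℝ), (1 : ℝ)) by ext <;> simp]
  simp only [map_add, map_smul, smul_eq_mul]

theorem abs_fderiv_apply_le_gammaR_mul {p q : ℝ} (hpq : p.HolderConjugate q)
    (v : ℝ × ℝ → ℝ) (x w : ℝ × ℝ) : |fderiv ℝ v x w| ≤ gammaR p w * gammaR q (grad2 v x) := by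
  rw [ContinuousLinearMap.apply_eq_fst_mul_add_snd_mul]
  exact abs_fst_mul_add_snd_mul_le_gammaR_mul hpq w (grad2 v x)

section GradientConstraint

variable {U : Set (ℝ × ℝ)} {p q : ℝ} {v : ℝ × ℝ → ℝ} {K : NNReal}
  (hpq : p.HolderConjugate q) (hv : LipschitzWith K v) (hU : IsOpen U)
  (hgrad : ∀ᵐ x : ℝ × ℝ, x ∈ U → DifferentiableAt ℝ v x ∧ gammaR q (grad2 v x) ≤ 1)
include hpq hv hU hgrad

theorem abs_sub_le_gammaR_of_segment_subset {a b : ℝ × ℝ} (hab : segment ℝ a b ⊆ U) :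
    |v b - v a| ≤ gammaR p (b - a) := by
  refine hv.abs_sub_le_of_ae_abs_fderiv_le volume hU hab ?_
  filter_upwards [hgrad] with x hx hxU
  obtain ⟨hdiff, hgradx⟩ := hx hxU
  exact ⟨hdiff, (abs_fderiv_apply_le_gammaR_mul hpq v x (b - a)).trans
    (mul_le_of_le_one_right (gammaR_nonneg _ _) hgradx)⟩

theorem abs_lineMap_sub_le_mul_gammaR {x y : ℝ × ℝ} {T : ℝ} (hT : 0 < T)
    (hxy : ∀ t ∈ Ico 0 T, lineMap x y t ∈ U) :
    |v (lineMap x y T) - v x| ≤ T * gammaR p (y - x) := by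
  have hclosed : IsClosed {s : ℝ | |v (lineMap x y s) - v x| ≤ T * gammaR p (y - x)} :=
    have := hv.continuous
    isClosed_le (by fun_prop) continuous_const
  refine (hclosed.closure_subset_iff (s := Ico 0 T)).2 (fun s hs ↦ ?_) ?_
  · have hseg : segment ℝ x (lineMap x y s) ⊆ U := by
      rw [segment_eq_image_lineMap]
      rintro _ ⟨r, hr, rfl⟩
      rw [lineMap_lineMap_right]
      exact hxy _ ⟨mul_nonneg hr.1 hs.1, (mul_le_of_le_one_left hs.1 hr.2).trans_lt hs.2⟩
    calc |v (lineMap x y s) - v x| ≤ gammaR p (lineMap x y s - x) :=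
          abs_sub_le_gammaR_of_segment_subset hpq hv hU hgrad hseg
      _ = s * gammaR p (y - x) := by
          rw [lineMap_apply_module', add_sub_cancel_right, gammaR_smul hpq.ne_zero,
            abs_of_nonneg hs.1]
      _ ≤ T * gammaR p (y - x) := mul_le_mul_of_nonneg_right hs.2.le (gammaR_nonneg _ _)
  · rw [closure_Ico hT.ne]
    exact right_mem_Icc.2 hT.le

end GradientConstraint

theorem le_dP_of_gradient_constraint_general
    (U : Set (ℝ × ℝ)) (hUo : IsOpen U) (hUb : Bornology.IsBounded U)
    (p q : ℝ) (hp : 1 < p) (hpq : 1 / p + 1 / q = 1)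
    (v : ℝ × ℝ → ℝ) (hLip : ∃ K, LipschitzWith K v)
    (hbd : ∀ y ∈ frontier U, v y = 0)
    (hgrad : ∀ᵐ x : ℝ × ℝ, x ∈ U → DifferentiableAt ℝ v x ∧ gammaR q (grad2 v x) ≤ 1)
    (x : ℝ × ℝ) (hx : x ∈ U) :
    v x ≤ dP p U x := by
  obtain ⟨K, hK⟩ := hLip
  have hconj : p.HolderConjugate q :=
    Real.holderConjugate_iff.2 ⟨hp, by simpa only [one_div] using hpq⟩
  obtain ⟨y₀, hy₀⟩ : (frontier U).Nonempty :=
    nonempty_frontier_iff.2 ⟨⟨x, hx⟩, fun h ↦ NormedSpace.unbounded_univ ℝ (ℝ × ℝ) (h ▸ hUb)⟩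
  refine le_csInf ⟨_, y₀, hy₀, rfl⟩ ?_
  rintro _ ⟨y, hy, rfl⟩
  have hyU : y ∉ U := (hUo.frontier_eq ▸ hy).2
  obtain ⟨T, ⟨hT0, hT1⟩, hzU, hxz⟩ := hUo.exists_lineMap_mem_frontier hx hyU
  calc v x ≤ |v (lineMap x y T) - v x| := by
        rw [hbd _ hzU, zero_sub, abs_neg]
        exact le_abs_self _
    _ ≤ T * gammaR p (y - x) := abs_lineMap_sub_le_mul_gammaR hconj hK hUo hgrad hT0 hxz
    _ ≤ gammaR p (x - y) := by
        rw [gammaR_sub_comm]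
        exact mul_le_of_le_one_left (gammaR_nonneg _ _) hT1

/-- A Lipschitz function vanishing on the boundary whose gradient satisfies
`γ_q(Dv) ≤ 1` a.e. is bounded above by the `p`-distance to the boundary. -/
theorem le_dP_of_gradient_constraint
    (U : Set (ℝ × ℝ)) (hUo : IsOpen U) (hUb : Bornology.IsBounded U)
    (p q : ℝ) (hq : 1 < q) (hp : 1 < p) (hpq : 1 / p + 1 / q = 1)
    (v : ℝ × ℝ → ℝ) (hLip : ∃ K, LipschitzWith K v)
    (hbd : ∀ y ∈ frontier U, v y = 0)
    (hgrad : ∀ᵐ x : ℝ × ℝ, x ∈ U → DifferentiableAt ℝ v x ∧ gammaR q (grad2 v x) ≤ 1)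
    (x : ℝ × ℝ) (hx : x ∈ U) :
    v x ≤ dP p U x :=
  le_dP_of_gradient_constraint_general U hUo hUb p q hp hpq v hLip hbd hgrad x hx
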